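/- arXiv:1212.6391 — 4 statements merged into one kernel-verified Lean document; each statement's English description precedes it below -/
import Mathlib

section
/- For every radial function f in H^1(ℝ²) with r^{λ-1}∂_r f ∈ L²(ℝ²) for λ ∈ {1,2}, there exists a constant C such that for all r > 0: r^λ |f(r)|² ≤ C(‖r^{λ-1}∂_r f‖²_{L²} + ‖f‖²_{L²}). -/
/-!
In polar coordinates both norms on the right are `2π ∫₀^∞ (⋯) y dy`. For `λ ≥ 1` one has
`s^λ = s · s^{λ-1}`, so
`(s^λ f²)' = λ s^{λ-1} f² + 2 s^λ f f' ≥ -s (f² + (s^{λ-1} f')²)`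
(the difference is `λ s^{λ-1} f² + s (f + s^{λ-1} f')² ≥ 0`). Integrating over `[r, R]` gives
`r^λ f(r)² ≤ R^λ f(R)² + (‖r^{λ-1} ∂_r f‖² + ‖f‖²) / 2π`. Since `y f(y)²` is integrable at
infinity, `R² f(R)²` cannot stay away from `0` as `R → ∞`, and for `λ ≤ 2` neither can the
boundary term `R^λ f(R)²`.
-/

open MeasureTheory Set Filter Real

theorem integral_fun_norm_euclideanSpace_fin_two {F : Type*} [NormedAddCommGroup F]
    [NormedSpace ℝ F] (f : ℝ → F) :
    ∫ x : EuclideanSpace ℝ (Fin 2), f ‖x‖ = (2 * π) • ∫ y in Ioi (0 : ℝ), y • f y := by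
  rw [integral_fun_norm_addHaar, finrank_euclideanSpace_fin, measureReal_def,
    EuclideanSpace.volume_ball_fin_two]
  simp only [ENNReal.ofReal_one, one_pow, one_mul, ENNReal.toReal_ofReal pi_pos.le,
    Nat.add_one_sub_one, pow_one]
  rw [← Nat.cast_smul_eq_nsmul ℝ, smul_smul, Nat.cast_two, mul_comm]

theorem integrable_fun_norm_euclideanSpace_fin_two_iff {F : Type*} [NormedAddCommGroup F]
    [NormedSpace ℝ F] {f : ℝ → F} :
    Integrable (fun x : EuclideanSpace ℝ (Fin 2) => f ‖x‖) ↔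
      IntegrableOn (fun y : ℝ => y • f y) (Ioi 0) := by
  simpa using integrable_fun_norm_addHaar (volume : Measure (EuclideanSpace ℝ (Fin 2))) (f := f)

theorem frequently_sq_mul_lt_of_integrableOn_Ioi {ψ : ℝ → ℝ}
    (hψ : IntegrableOn (fun y => y * ψ y) (Ioi 0)) {ε : ℝ} (hε : 0 < ε) :
    ∃ᶠ R in atTop, R ^ 2 * ψ R < ε := by
  by_contra h
  obtain ⟨a, ha⟩ := eventually_atTop.1 (not_frequently.1 h)
  refine not_integrableOn_Ioi_inv (a := max a 1) ?_
  -- otherwise `y⁻¹ ≤ ε⁻¹ * (y * ψ y)` near infinity, and `y⁻¹` is not integrable there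
  refine ((hψ.mono_set (Ioi_subset_Ioi (by positivity))).const_mul ε⁻¹).mono'
    measurable_inv.aestronglyMeasurable ((ae_restrict_iff' measurableSet_Ioi).2 (.of_forall ?_))
  intro y hy
  have hy0 : 0 < y := lt_of_lt_of_le one_pos ((le_max_right a 1).trans hy.le)
  have := not_lt.1 (ha y ((le_max_left a 1).trans hy.le))
  rw [norm_inv, Real.norm_of_nonneg hy0.le, inv_le_iff_one_le_mul₀ hy0]
  calc 1 ≤ y ^ 2 * ψ y / ε := by rwa [one_le_div hε]
    _ = ε⁻¹ * (y * ψ y) * y := by field_simp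

theorem pow_mul_sq_le_add_intervalIntegral {g : ℝ → ℝ} (hg : ContDiff ℝ 1 g) {l : ℕ}
    (hl : 1 ≤ l) {r R : ℝ} (hr : 0 < r) (hrR : r ≤ R) :
    r ^ l * g r ^ 2 ≤
      R ^ l * g R ^ 2 + ∫ s in r..R, (s * g s ^ 2 + s * (s ^ (l - 1) * deriv g s) ^ 2) := by
  set D : ℝ → ℝ := fun s => l * s ^ (l - 1) * g s ^ 2 + s ^ l * (2 * g s * deriv g s)
  have hderiv (s : ℝ) : HasDerivAt (fun t => t ^ l * g t ^ 2) (D s) s := by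
    refine ((hasDerivAt_pow l s).mul
      (((hg.differentiable one_ne_zero) s).hasDerivAt.pow 2)).congr_deriv ?_
    simp only [D, Pi.pow_apply]; ring
  have hg_cont := hg.continuous
  have hdg_cont := hg.continuous_deriv le_rfl
  have hD_cont : Continuous D := by fun_prop
  have hG_cont : Continuous fun s => s * g s ^ 2 + s * (s ^ (l - 1) * deriv g s) ^ 2 := by
    fun_prop
  have hftc : ∫ s in r..R, D s = R ^ l * g R ^ 2 - r ^ l * g r ^ 2 :=
    intervalIntegral.integral_eq_sub_of_hasDerivAt (fun s _ => hderiv s)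
      (hD_cont.intervalIntegrable _ _)
  have hsum_nonneg :
      0 ≤ ∫ s in r..R, (D s + (s * g s ^ 2 + s * (s ^ (l - 1) * deriv g s) ^ 2)) := by
    refine intervalIntegral.integral_nonneg hrR fun s hs => ?_
    have hs0 : 0 ≤ s := hr.le.trans hs.1
    have hpow : s ^ l = s * s ^ (l - 1) := by rw [← pow_succ']; congr 1; omega
    have : 0 ≤ (l : ℝ) * s ^ (l - 1) * g s ^ 2 := by positivity
    have : 0 ≤ s * (g s + s ^ (l - 1) * deriv g s) ^ 2 := by positivity
    simp only [D, hpow]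
    nlinarith
  rw [intervalIntegral.integral_add (hD_cont.intervalIntegrable _ _)
    (hG_cont.intervalIntegrable _ _), hftc] at hsum_nonneg
  linarith

theorem pow_mul_sq_le_integral_Ioi {g : ℝ → ℝ} (hg : ContDiff ℝ 1 g) {l : ℕ} (hl₁ : 1 ≤ l)
    (hl₂ : l ≤ 2) (hdg : IntegrableOn (fun y => y * (y ^ (l - 1) * deriv g y) ^ 2) (Ioi 0))
    (hg_int : IntegrableOn (fun y => y * g y ^ 2) (Ioi 0)) {r : ℝ} (hr : 0 < r) :
    r ^ l * g r ^ 2 ≤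
      (∫ y in Ioi 0, y * (y ^ (l - 1) * deriv g y) ^ 2) + ∫ y in Ioi 0, y * g y ^ 2 := by
  refine le_of_forall_pos_le_add fun ε hε => ?_
  obtain ⟨R, hR_small, hR_large⟩ :=
    ((frequently_sq_mul_lt_of_integrableOn_Ioi hg_int hε).and_eventually
      (eventually_ge_atTop (max r 1))).exists
  have hrR : r ≤ R := (le_max_left r 1).trans hR_large
  have hR_tail : R ^ l * g R ^ 2 < ε :=
    lt_of_le_of_lt (by gcongr; exact (le_max_right r 1).trans hR_large) hR_small
  have hbulk : ∫ s in r..R, (s * g s ^ 2 + s * (s ^ (l - 1) * deriv g s) ^ 2) ≤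
      (∫ y in Ioi 0, y * g y ^ 2) + ∫ y in Ioi 0, y * (y ^ (l - 1) * deriv g y) ^ 2 := by
    rw [intervalIntegral.integral_of_le hrR, ← integral_add hg_int hdg]
    refine setIntegral_mono_set (hg_int.add hdg) ?_
      ((Ioc_subset_Ioi_self.trans (Ioi_subset_Ioi hr.le)).eventuallyLE)
    filter_upwards [self_mem_ae_restrict measurableSet_Ioi] with y (hy : 0 < y)
    positivity
  linarith [pow_mul_sq_le_add_intervalIntegral hg hl₁ hr hrR]

/-- Lemma 3.1, first inequality: for radial `f(x) = g(|x|)` in `H¹(ℝ²)` with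
`r^{λ-1} ∂_r f ∈ L²(ℝ²)`, `λ ∈ {1,2}`, one has
`r^λ |f(r)|² ≤ C (‖r^{λ-1} ∂_r f‖²_{L²} + ‖f‖²_{L²})` for all `r > 0`. -/
theorem radial_weighted_decay :
    ∃ C : ℝ, 0 < C ∧
      ∀ (g : ℝ → ℝ) (l : ℕ), (l = 1 ∨ l = 2) →
        ContDiff ℝ 1 g →
        Integrable (fun x : EuclideanSpace ℝ (Fin 2) => (g ‖x‖) ^ 2) →
        Integrable (fun x : EuclideanSpace ℝ (Fin 2) => (‖x‖ ^ (l - 1) * deriv g ‖x‖) ^ 2) →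
        ∀ r : ℝ, 0 < r →
          r ^ l * (g r) ^ 2 ≤
            C * ((∫ x : EuclideanSpace ℝ (Fin 2), (‖x‖ ^ (l - 1) * deriv g ‖x‖) ^ 2) +
                 ∫ x : EuclideanSpace ℝ (Fin 2), (g ‖x‖) ^ 2) := by
  refine ⟨(2 * π)⁻¹, by positivity, fun g l hl hg hg_int hdg r hr => ?_⟩
  simp only [integral_fun_norm_euclideanSpace_fin_two (fun y => (y ^ (l - 1) * deriv g y) ^ 2),
    integral_fun_norm_euclideanSpace_fin_two (fun y => g y ^ 2), smul_eq_mul, ← mul_add,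
    inv_mul_cancel_left₀ (by positivity : (2 * π) ≠ 0)]
  exact pow_mul_sq_le_integral_Ioi hg (by omega) (by omega)
    (integrable_fun_norm_euclideanSpace_fin_two_iff.1 hdg)
    (integrable_fun_norm_euclideanSpace_fin_two_iff.1 hg_int) hr
end

section
/- For every radial function f ∈ C_0^1(ℝ²), every t ≥ 0, and λ ∈ {1,2}, there exists a universal constant C such that for all r > 0: r⟨t-r⟩^λ |f(r)|² ≤ C(‖⟨t-r⟩ ∂_r f‖²_{L²(ℝ²)} + ‖⟨t-r⟩^{λ-1} f‖²_{L²(ℝ²)}), where ⟨σ⟩ = √(1+σ²). -/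
/-!
Put `u(s) = ⟨t-s⟩^λ g(s)²`. Since `u` has compact support, `u(r) = -∫_r^∞ u'`, so
`r u(r) ≤ ∫_r^∞ s |u'(s)| ds`. As `⟨t-s⟩ ≥ 1` and `|∂_s ⟨t-s⟩| ≤ 1`, Young's inequality gives
`|u'| ≤ (λ+1) ((⟨t-s⟩ g')² + (⟨t-s⟩^{λ-1} g)²)`, and the weight `s ds` is, up to the factor `2π`,
Lebesgue measure on `ℝ²` in polar coordinates; as `λ ≤ 2`, `C = 3/(2π)` works.
-/

open MeasureTheory

/-- `⟨σ⟩ = √(1+σ²)`. -/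
noncomputable def jap (σ : ℝ) : ℝ := Real.sqrt (1 + σ ^ 2)

open Set Real

theorem integral_norm_euclideanSpace_fin_two (f : ℝ → ℝ) :
    ∫ x : EuclideanSpace ℝ (Fin 2), f ‖x‖ = 2 * π * ∫ y in Ioi (0 : ℝ), y * f y := by
  rw [integral_fun_norm_addHaar]
  simp [Measure.real, mul_assoc, pi_nonneg]

lemma integrable_id_mul {f : ℝ → ℝ} (hf : Continuous f) (hfc : HasCompactSupport f) :
    Integrable (fun s => s * f s) :=
  (continuous_id.mul hf).integrable_of_hasCompactSupport hfc.mul_left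

theorem mul_abs_le_integral_mul_abs_deriv {u : ℝ → ℝ} (hu : ContDiff ℝ 1 u)
    (huc : HasCompactSupport u) {r : ℝ} (hr : 0 ≤ r) :
    r * |u r| ≤ ∫ s in Ioi 0, s * |deriv u s| := by
  have hu' : Continuous (deriv u) := hu.continuous_deriv le_rfl
  have hint : Integrable (fun s => s * |deriv u s|) := integrable_id_mul hu'.abs huc.deriv.norm
  calc r * |u r| = r * |∫ s in Ioi r, deriv u s| := by
        rw [huc.integral_Ioi_deriv_eq hu, abs_neg]
    _ ≤ r * ∫ s in Ioi r, |deriv u s| := by gcongr; exact abs_integral_le_integral_abs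
    _ = ∫ s in Ioi r, r * |deriv u s| := (integral_const_mul _ _).symm
    _ ≤ ∫ s in Ioi r, s * |deriv u s| := by
        refine setIntegral_mono_on ?_ hint.integrableOn measurableSet_Ioi fun s hs => ?_
        · exact (hu'.abs.integrable_of_hasCompactSupport huc.deriv.norm).integrableOn.const_mul r
        · exact mul_le_mul_of_nonneg_right (le_of_lt hs) (abs_nonneg _)
    _ ≤ ∫ s in Ioi 0, s * |deriv u s| := by
        refine setIntegral_mono_set hint.integrableOn ?_ (Ioi_subset_Ioi hr).eventuallyLE
        exact (ae_restrict_iff' measurableSet_Ioi).2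
          (ae_of_all _ fun s hs => mul_nonneg (le_of_lt hs) (abs_nonneg _))

theorem abs_deriv_pow_mul_sq_le {a b G G' : ℝ} (ha : 1 ≤ a) (hb : |b| ≤ 1) (l : ℕ) :
    |l * a ^ (l - 1) * b * G ^ 2 + a ^ l * (2 * G * G')| ≤
      (l + 1) * ((a * G') ^ 2 + (a ^ (l - 1) * G) ^ 2) := by
  set p := a ^ (l - 1)
  have ha0 : 0 < a := by linarith
  have hp : 1 ≤ p := one_le_pow₀ ha
  have hp0 : 0 < p := by linarith
  have hap : a ^ l ≤ a * p := by
    rcases l with _ | l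
    · simpa [p] using ha
    · simp [p, pow_succ']
  have hl : (0 : ℝ) ≤ l := l.cast_nonneg
  have h1 : |l * p * b * G ^ 2| ≤ l * (p * G) ^ 2 :=
    calc |l * p * b * G ^ 2| = l * p * |b| * G ^ 2 := by
          rw [abs_mul, abs_mul, abs_mul, abs_of_nonneg hl, abs_of_pos hp0, abs_sq]
      _ ≤ l * p * 1 * G ^ 2 := by gcongr
      _ ≤ l * (p * G) ^ 2 := by
          nlinarith [mul_nonneg (mul_nonneg (mul_nonneg hl (sq_nonneg G)) hp0.le) (sub_nonneg.2 hp)]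
  have h2 : |a ^ l * (2 * G * G')| ≤ (a * G') ^ 2 + (p * G) ^ 2 :=
    calc |a ^ l * (2 * G * G')| = a ^ l * (2 * |G| * |G'|) := by
          rw [abs_mul, abs_of_pos (by positivity), abs_mul, abs_mul, abs_two]
      _ ≤ a * p * (2 * |G| * |G'|) := by gcongr
      _ = 2 * |a * G'| * |p * G| := by
          rw [abs_mul, abs_mul, abs_of_pos ha0, abs_of_pos hp0]; ring
      _ ≤ |a * G'| ^ 2 + |p * G| ^ 2 := two_mul_le_add_sq _ _
      _ = (a * G') ^ 2 + (p * G) ^ 2 := by rw [sq_abs, sq_abs]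
  calc _ ≤ |l * p * b * G ^ 2| + |a ^ l * (2 * G * G')| := abs_add_le _ _
    _ ≤ l * (p * G) ^ 2 + ((a * G') ^ 2 + (p * G) ^ 2) := add_le_add h1 h2
    _ ≤ _ := by nlinarith [mul_nonneg hl (sq_nonneg (a * G'))]

theorem mul_pow_mul_sq_le_integral_Ioi {w g : ℝ → ℝ} (hw : ContDiff ℝ 1 w)
    (hw1 : ∀ s, 1 ≤ w s) (hw' : ∀ s, |deriv w s| ≤ 1) (hg : ContDiff ℝ 1 g)
    (hgc : HasCompactSupport g) (l : ℕ) {r : ℝ} (hr : 0 ≤ r) :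
    r * w r ^ l * g r ^ 2 ≤ (l + 1) * ((∫ s in Ioi 0, s * (w s * deriv g s) ^ 2) +
      ∫ s in Ioi 0, s * (w s ^ (l - 1) * g s) ^ 2) := by
  set u := fun s => w s ^ l * g s ^ 2
  have hu : ContDiff ℝ 1 u := (hw.pow l).mul (hg.pow 2)
  have huc : HasCompactSupport u :=
    (hgc.comp_left (g := fun x : ℝ => x ^ 2) (zero_pow two_ne_zero)).mul_left
  have hu' (s : ℝ) :
      deriv u s = l * w s ^ (l - 1) * deriv w s * g s ^ 2 + w s ^ l * (2 * g s * deriv g s) := by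
    have hws := (hw.differentiable one_ne_zero s).hasDerivAt.fun_pow l
    have hgs := (hg.differentiable one_ne_zero s).hasDerivAt.fun_pow 2
    rw [(hws.fun_mul hgs).deriv]
    norm_num
  have hA : Integrable (fun s => s * (w s * deriv g s) ^ 2) :=
    integrable_id_mul ((hw.continuous.mul (hg.continuous_deriv le_rfl)).pow 2)
      (hgc.deriv.mul_left.comp_left (g := fun x : ℝ => x ^ 2) (zero_pow two_ne_zero))
  have hB : Integrable (fun s => s * (w s ^ (l - 1) * g s) ^ 2) :=
    integrable_id_mul (((hw.continuous.pow _).mul hg.continuous).pow 2)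
      (hgc.mul_left.comp_left (g := fun x : ℝ => x ^ 2) (zero_pow two_ne_zero))
  calc r * w r ^ l * g r ^ 2 = r * |u r| := by
        rw [abs_of_nonneg (mul_nonneg (pow_nonneg (by linarith [hw1 r]) _) (sq_nonneg _)),
          mul_assoc]
    _ ≤ ∫ s in Ioi 0, s * |deriv u s| := mul_abs_le_integral_mul_abs_deriv hu huc hr
    _ ≤ ∫ s in Ioi 0, (l + 1) * (s * (w s * deriv g s) ^ 2 + s * (w s ^ (l - 1) * g s) ^ 2) := by
        refine integral_mono_of_nonneg ?_ ((hA.add hB).const_mul _).integrableOn ?_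
        · exact (ae_restrict_iff' measurableSet_Ioi).2
            (ae_of_all _ fun s hs => mul_nonneg (le_of_lt hs) (abs_nonneg _))
        · refine (ae_restrict_iff' measurableSet_Ioi).2 (ae_of_all _ fun s hs => ?_)
          dsimp only
          rw [hu']
          exact (mul_le_mul_of_nonneg_left (abs_deriv_pow_mul_sq_le (hw1 s) (hw' s) l)
            (le_of_lt hs)).trans_eq (by ring)
    _ = _ := by rw [integral_const_mul, integral_add hA.integrableOn hB.integrableOn]

lemma one_le_jap (σ : ℝ) : 1 ≤ jap σ :=
  one_le_sqrt.2 (le_add_of_nonneg_right (sq_nonneg σ))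

lemma contDiff_jap {n : WithTop ℕ∞} : ContDiff ℝ n jap :=
  (contDiff_const.add (contDiff_id.pow 2)).sqrt fun σ => by positivity

lemma hasDerivAt_jap (σ : ℝ) : HasDerivAt jap (σ / jap σ) σ := by
  refine HasDerivAt.congr_deriv (f := jap)
    ((((hasDerivAt_id' σ).fun_pow 2).const_add 1).sqrt (by positivity)) ?_
  simp only [jap]
  field_simp
  norm_num

lemma abs_div_jap_le_one (σ : ℝ) : |σ / jap σ| ≤ 1 := by
  have hσ : |σ| ≤ jap σ := by
    rw [← sqrt_sq_eq_abs]
    exact sqrt_le_sqrt (le_add_of_nonneg_left zero_le_one)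
  have hpos : 0 < jap σ := by linarith [one_le_jap σ]
  rw [abs_div, abs_of_pos hpos]
  exact div_le_one_of_le₀ hσ hpos.le

lemma abs_deriv_jap_sub_le_one (t s : ℝ) : |deriv (fun s => jap (t - s)) s| ≤ 1 := by
  have h : HasDerivAt (fun s => jap (t - s)) ((t - s) / jap (t - s) * -1) s :=
    (hasDerivAt_jap (t - s)).comp s ((hasDerivAt_id s).const_sub t)
  rw [h.deriv, mul_neg_one, abs_neg]
  exact abs_div_jap_le_one _

/-- Lemma 3.1, second inequality: for radial `f(x) = g(|x|)` in `C_0^1(ℝ²)`, `t ≥ 0`,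
`λ ∈ {1,2}`:
`r ⟨t-r⟩^λ |f(r)|² ≤ C (‖⟨t-r⟩ ∂_r f‖²_{L²(ℝ²)} + ‖⟨t-r⟩^{λ-1} f‖²_{L²(ℝ²)})`. -/
theorem radial_weighted_decay_ghost :
    ∃ C : ℝ, 0 < C ∧
      ∀ (g : ℝ → ℝ) (l : ℕ) (t : ℝ), (l = 1 ∨ l = 2) → 0 ≤ t →
        ContDiff ℝ 1 g → HasCompactSupport g →
        ∀ r : ℝ, 0 < r →
          r * jap (t - r) ^ l * (g r) ^ 2 ≤
            C * ((∫ x : EuclideanSpace ℝ (Fin 2), (jap (t - ‖x‖) * deriv g ‖x‖) ^ 2) +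
                 ∫ x : EuclideanSpace ℝ (Fin 2), (jap (t - ‖x‖) ^ (l - 1) * g ‖x‖) ^ 2) := by
  refine ⟨3 / (2 * π), by positivity, fun g l t hl _ hg hgc r hr => ?_⟩
  have key := mul_pow_mul_sq_le_integral_Ioi (w := fun s => jap (t - s))
    (contDiff_jap.comp (contDiff_const.sub contDiff_id))
    (fun s => one_le_jap (t - s)) (abs_deriv_jap_sub_le_one t) hg hgc l hr.le
  rw [integral_norm_euclideanSpace_fin_two fun y => (jap (t - y) * deriv g y) ^ 2,
    integral_norm_euclideanSpace_fin_two fun y => (jap (t - y) ^ (l - 1) * g y) ^ 2]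
  set I := (∫ s in Ioi 0, s * (jap (t - s) * deriv g s) ^ 2) +
    ∫ s in Ioi 0, s * (jap (t - s) ^ (l - 1) * g s) ^ 2
  have hI : 0 ≤ I := add_nonneg
    (setIntegral_nonneg measurableSet_Ioi fun s hs => mul_nonneg (le_of_lt hs) (sq_nonneg _))
    (setIntegral_nonneg measurableSet_Ioi fun s hs => mul_nonneg (le_of_lt hs) (sq_nonneg _))
  have hl3 : (l : ℝ) + 1 ≤ 3 := by rcases hl with rfl | rfl <;> norm_num
  calc _ ≤ (l + 1) * I := key
    _ ≤ 3 * I := by gcongr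
    _ = _ := by rw [← mul_add, ← mul_assoc, div_mul_cancel₀ _ (by positivity)]
end

section
/- There is a constant C such that for all f ∈ H²(ℝ²) and λ ∈ {1,2} with the right-hand side finite: r^λ |f(x)|² ≤ C ∑_{a=0,1} (‖r^{λ-1} ∂_r Ω^a f‖²_{L²} + ‖Ω^a f‖²_{L²}) for all x ∈ ℝ², where r = |x| and Ω = x₂∂₁ - x₁∂₂. -/
/-!
Along a ray `s ↦ s • θ`, a one-dimensional weighted estimate bounds `r ^ λ g(r)²` by
`∫₀^∞ s (s ^ (λ - 1) g')² + ∫₀^∞ s g²`. For `λ = 2` integrate `(s g)²' = 2 s g² + 2 s² g g'`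
from `0` to `r`. For `λ = 1` compare `g r` with the value of `g` at a point of
`[max r 1, max r 1 + 1]` where `g²` is below its weighted mean, and bound the difference by
Cauchy–Schwarz with the weights `σ` and `σ⁻¹`, whose integral over `[r, r + 2]` is `O(1 / r)`.

On the circle of radius `r`, `Ω` is minus the angular derivative, so a one-dimensional Sobolev
inequality for periodic functions bounds `f(x)²` by the angular integral of `f² + (Ω f)²`.
Applying the ray estimate to `f` and to `Ω f` and integrating it over the angle, the weight
`s ds dθ` becomes Lebesgue measure on `ℝ²`.
-/

open MeasureTheory

noncomputable def pderiv2 (i : Fin 2) (f : EuclideanSpace ℝ (Fin 2) → ℝ)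
    (x : EuclideanSpace ℝ (Fin 2)) : ℝ :=
  fderiv ℝ f x (EuclideanSpace.single i 1)

noncomputable def rderiv2 (f : EuclideanSpace ℝ (Fin 2) → ℝ)
    (x : EuclideanSpace ℝ (Fin 2)) : ℝ :=
  fderiv ℝ f x (‖x‖⁻¹ • x)

noncomputable def rot2 (f : EuclideanSpace ℝ (Fin 2) → ℝ)
    (x : EuclideanSpace ℝ (Fin 2)) : ℝ :=
  x 1 * pderiv2 0 f x - x 0 * pderiv2 1 f x

open Set Real Function

local notation "ℝ²" => EuclideanSpace ℝ (Fin 2)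

section OneDimensional

variable {g : ℝ → ℝ}

lemma sq_integral_le_integral_mul_integral_inv {h w : ℝ → ℝ} {a b : ℝ} (hab : a ≤ b)
    (hw : ∀ x ∈ Icc a b, 0 < w x) (hh : IntervalIntegrable h volume a b)
    (hwh : IntervalIntegrable (fun x => w x * h x ^ 2) volume a b)
    (hw' : IntervalIntegrable (fun x => (w x)⁻¹) volume a b) :
    (∫ x in a..b, h x) ^ 2 ≤ (∫ x in a..b, w x * h x ^ 2) * ∫ x in a..b, (w x)⁻¹ := by
  set S := ∫ x in a..b, h x
  set P := ∫ x in a..b, w x * h x ^ 2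
  set Q := ∫ x in a..b, (w x)⁻¹
  -- `∫ w⁻¹ (w h - c)² = P - 2 S c + Q c²` is nonnegative for every `c`: its discriminant is `≤ 0`
  have hquad : ∀ c : ℝ, 0 ≤ Q * (c * c) + (-2 * S) * c + P := by
    intro c
    have hexpand : ∫ x in a..b, (w x)⁻¹ * (w x * h x - c) ^ 2
        = ∫ x in a..b, (w x * h x ^ 2 - 2 * c * h x + c ^ 2 * (w x)⁻¹) := by
      refine intervalIntegral.integral_congr fun x hx => ?_
      rw [uIcc_of_le hab] at hx
      have := (hw x hx).ne'
      field_simp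
      ring
    have hnonneg : 0 ≤ ∫ x in a..b, (w x)⁻¹ * (w x * h x - c) ^ 2 :=
      intervalIntegral.integral_nonneg hab fun x hx =>
        mul_nonneg (inv_nonneg.2 (hw x hx).le) (sq_nonneg _)
    rw [hexpand, intervalIntegral.integral_add (hwh.sub (hh.const_mul _)) (hw'.const_mul _),
      intervalIntegral.integral_sub hwh (hh.const_mul _), intervalIntegral.integral_const_mul,
      intervalIntegral.integral_const_mul] at hnonneg
    linarith
  have := discrim_le_zero hquad
  rw [discrim] at this
  linarith

lemma exists_mem_Icc_integral_mul_le {w φ : ℝ → ℝ} (hw : Continuous w) (hφ : Continuous φ)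
    {a b : ℝ} (hab : a ≤ b) (hw0 : ∀ x ∈ Icc a b, 0 ≤ w x) :
    ∃ s ∈ Icc a b, (∫ x in a..b, w x) * φ s ≤ ∫ x in a..b, w x * φ x := by
  obtain ⟨s, hs, hmin⟩ := isCompact_Icc.exists_isMinOn (nonempty_Icc.2 hab) hφ.continuousOn
  refine ⟨s, hs, ?_⟩
  rw [← intervalIntegral.integral_mul_const]
  exact intervalIntegral.integral_mono_on hab ((hw.mul continuous_const).intervalIntegrable _ _)
    ((hw.mul hφ).intervalIntegrable _ _) fun x hx => mul_le_mul_of_nonneg_left (hmin hx) (hw0 x hx)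

lemma intervalIntegral_le_integral_Ioi {F : ℝ → ℝ} {c a b : ℝ} (hF : IntegrableOn F (Ioi c))
    (hF0 : ∀ x ∈ Ioi c, 0 ≤ F x) (hca : c ≤ a) (hab : a ≤ b) :
    ∫ x in a..b, F x ≤ ∫ x in Ioi c, F x := by
  rw [intervalIntegral.integral_of_le hab]
  exact setIntegral_mono_set hF ((ae_restrict_iff' measurableSet_Ioi).2 (ae_of_all _ hF0))
    (Ioc_subset_Ioi_self.trans (Ioi_subset_Ioi hca)).eventuallyLE

lemma sq_sub_sq_eq_integral (hg : ContDiff ℝ 1 g) (a b : ℝ) :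
    g b ^ 2 - g a ^ 2 = ∫ x in a..b, 2 * g x * deriv g x := by
  have hc : Continuous fun x => 2 * g x * deriv g x :=
    (continuous_const.mul hg.continuous).mul (hg.continuous_deriv le_rfl)
  refine (intervalIntegral.integral_eq_sub_of_hasDerivAt (f := fun x => g x ^ 2) (fun x _ => ?_)
    (hc.intervalIntegrable _ _)).symm
  exact ((hg.differentiable one_ne_zero x).hasDerivAt.pow 2).congr_deriv (by ring)

lemma sq_le_integral_of_periodic (hg : ContDiff ℝ 1 g) {T : ℝ} (hT : 0 < T)
    (hper : Periodic g T) (c t : ℝ) :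
    g t ^ 2 ≤ (T⁻¹ + 1) * ∫ x in c..c + T, (g x ^ 2 + deriv g x ^ 2) := by
  have hgc := hg.continuous
  have hg'c := hg.continuous_deriv le_rfl
  have hE : Continuous fun x => g x ^ 2 + deriv g x ^ 2 := by fun_prop
  have hper' : Periodic (deriv g) T := fun x => by
    rw [← deriv_comp_add_const, show (fun x => g (x + T)) = g from funext hper]
  set D := ∫ x in t - T..t, (g x ^ 2 + deriv g x ^ 2)
  have hD : ∫ x in c..c + T, (g x ^ 2 + deriv g x ^ 2) = D := by
    have := (show Periodic (fun x => g x ^ 2 + deriv g x ^ 2) T from fun x => by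
      simp only [hper x, hper' x]).intervalIntegral_add_eq c (t - T)
    rwa [sub_add_cancel] at this
  have hTt : t - T ≤ t := by linarith
  obtain ⟨s, hs, hmin⟩ := exists_mem_Icc_integral_mul_le continuous_const (hgc.pow 2) hTt
    fun _ _ => zero_le_one
  have hs_min : T * g s ^ 2 ≤ D := by
    simp only [intervalIntegral.integral_const, sub_sub_cancel, smul_eq_mul, mul_one,
      one_mul] at hmin
    exact hmin.trans (intervalIntegral.integral_mono_on hTt ((hgc.pow 2).intervalIntegrable _ _)
      (hE.intervalIntegrable _ _) fun x _ => le_add_of_nonneg_right (sq_nonneg _))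
  have hs_t : g t ^ 2 - g s ^ 2 ≤ D := by
    rw [sq_sub_sq_eq_integral hg]
    calc ∫ x in s..t, 2 * g x * deriv g x
        ≤ ∫ x in s..t, (g x ^ 2 + deriv g x ^ 2) :=
          intervalIntegral.integral_mono_on hs.2
            ((by fun_prop : Continuous fun x => 2 * g x * deriv g x).intervalIntegrable _ _)
            (hE.intervalIntegrable _ _) fun x _ => by nlinarith [sq_nonneg (g x - deriv g x)]
      _ ≤ D := intervalIntegral.integral_mono_interval hs.1 hs.2 le_rfl
          (ae_of_all _ fun x => by positivity) (hE.intervalIntegrable _ _)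
  have : g s ^ 2 ≤ T⁻¹ * D := by rw [le_inv_mul_iff₀ hT]; exact hs_min
  rw [hD]
  linarith

lemma mul_sq_le_of_contDiff (hg : ContDiff ℝ 1 g)
    (h₁ : IntegrableOn (fun s => s * deriv g s ^ 2) (Ioi 0))
    (h₂ : IntegrableOn (fun s => s * g s ^ 2) (Ioi 0)) {r : ℝ} (hr : 0 < r) :
    r * g r ^ 2 ≤ 4 * (∫ s in Ioi 0, s * deriv g s ^ 2) + 2 * ∫ s in Ioi 0, s * g s ^ 2 := by
  set A₁ := ∫ s in Ioi 0, s * deriv g s ^ 2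
  set A₂ := ∫ s in Ioi 0, s * g s ^ 2
  have hw (φ : ℝ → ℝ) : ∀ x ∈ Ioi (0 : ℝ), 0 ≤ x * φ x ^ 2 := fun x hx =>
    mul_nonneg (le_of_lt hx) (sq_nonneg _)
  have hg'c := hg.continuous_deriv le_rfl
  set a := max r 1
  have hra : r ≤ a := le_max_left r 1
  have ha : 0 < a := hr.trans_le hra
  obtain ⟨s₀, ⟨has₀, hs₀a⟩, hmin⟩ := exists_mem_Icc_integral_mul_le (w := fun x => x)
    (φ := fun x => g x ^ 2) continuous_id (hg.continuous.pow 2) (by linarith : a ≤ a + 1)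
    fun x hx => ha.le.trans hx.1
  have hrs₀ : r ≤ s₀ := hra.trans has₀
  have hs₀r : s₀ - r ≤ 2 := by
    have : a ≤ r + 1 := max_le (by linarith) (by linarith)
    linarith
  have hgs₀ : r * g s₀ ^ 2 ≤ A₂ := by
    have hmass : r ≤ ∫ x in a..a + 1, x := by rw [integral_id]; nlinarith
    calc r * g s₀ ^ 2 ≤ (∫ x in a..a + 1, x) * g s₀ ^ 2 :=
          mul_le_mul_of_nonneg_right hmass (sq_nonneg _)
      _ ≤ ∫ x in a..a + 1, x * g x ^ 2 := hmin
      _ ≤ A₂ := intervalIntegral_le_integral_Ioi h₂ (hw g) ha.le (by linarith)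
  have hinv_int : IntervalIntegrable (fun x : ℝ => x⁻¹) volume r s₀ :=
    intervalIntegral.intervalIntegrable_inv
      (fun x hx => ((uIcc_of_le hrs₀ ▸ hx).1 |> hr.trans_le).ne') continuousOn_id
  have hinv : ∫ x in r..s₀, x⁻¹ ≤ (s₀ - r) * r⁻¹ := by
    calc ∫ x in r..s₀, x⁻¹ ≤ ∫ _ in r..s₀, r⁻¹ :=
          intervalIntegral.integral_mono_on hrs₀ hinv_int intervalIntegrable_const
            fun x hx => inv_anti₀ hr hx.1
      _ = (s₀ - r) * r⁻¹ := by rw [intervalIntegral.integral_const, smul_eq_mul]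
  have hA₁ : 0 ≤ A₁ := setIntegral_nonneg measurableSet_Ioi (hw (deriv g))
  have hCS : (g s₀ - g r) ^ 2 ≤ A₁ * ((s₀ - r) * r⁻¹) := by
    rw [← intervalIntegral.integral_deriv_eq_sub (fun x _ => hg.differentiable one_ne_zero x)
      (hg'c.intervalIntegrable _ _)]
    refine (sq_integral_le_integral_mul_integral_inv hrs₀ (fun x hx => hr.trans_le hx.1)
      (hg'c.intervalIntegrable _ _) ((continuous_id.mul (hg'c.pow 2)).intervalIntegrable _ _)
      hinv_int).trans (mul_le_mul ?_ hinv ?_ hA₁)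
    · exact intervalIntegral_le_integral_Ioi h₁ (hw (deriv g)) hr.le hrs₀
    · exact intervalIntegral.integral_nonneg hrs₀ fun x hx => inv_nonneg.2 (hr.le.trans hx.1)
  have hdiff : r * (g s₀ - g r) ^ 2 ≤ 2 * A₁ := by
    calc r * (g s₀ - g r) ^ 2 ≤ r * (A₁ * ((s₀ - r) * r⁻¹)) :=
          mul_le_mul_of_nonneg_left hCS hr.le
      _ = A₁ * (s₀ - r) := by field_simp
      _ ≤ 2 * A₁ := by nlinarith
  nlinarith [sq_nonneg (2 * g s₀ - g r)]

lemma sq_mul_sq_le_of_contDiff (hg : ContDiff ℝ 1 g)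
    (h₁ : IntegrableOn (fun s => s * (s * deriv g s) ^ 2) (Ioi 0))
    (h₂ : IntegrableOn (fun s => s * g s ^ 2) (Ioi 0)) {r : ℝ} (hr : 0 ≤ r) :
    r ^ 2 * g r ^ 2 ≤ (∫ s in Ioi 0, s * (s * deriv g s) ^ 2) + 3 * ∫ s in Ioi 0, s * g s ^ 2 := by
  have hw (φ : ℝ → ℝ) : ∀ x ∈ Ioi (0 : ℝ), 0 ≤ x * φ x ^ 2 := fun x hx =>
    mul_nonneg (le_of_lt hx) (sq_nonneg _)
  have hg'c := hg.continuous_deriv le_rfl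
  have hderiv (s : ℝ) : deriv (fun s => s * g s) s = g s + s * deriv g s := by
    rw [((hasDerivAt_id' s).fun_mul (hg.differentiable one_ne_zero s).hasDerivAt).deriv]
    ring
  have hftc : (r * g r) ^ 2 = ∫ x in (0 : ℝ)..r, 2 * (x * g x) * (g x + x * deriv g x) := by
    simpa [hderiv] using sq_sub_sq_eq_integral (contDiff_id.mul hg) 0 r
  have hpt : ∫ x in (0 : ℝ)..r, 2 * (x * g x) * (g x + x * deriv g x)
      ≤ ∫ x in (0 : ℝ)..r, (x * (x * deriv g x) ^ 2 + 3 * (x * g x ^ 2)) :=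
    intervalIntegral.integral_mono_on hr (Continuous.intervalIntegrable (by fun_prop) _ _)
      (Continuous.intervalIntegrable (by fun_prop) _ _) fun x hx => by
        nlinarith [mul_nonneg hx.1 (sq_nonneg (g x - x * deriv g x))]
  rw [intervalIntegral.integral_add (Continuous.intervalIntegrable (by fun_prop) _ _)
      (Continuous.intervalIntegrable (by fun_prop) _ _),
    intervalIntegral.integral_const_mul] at hpt
  nlinarith [intervalIntegral_le_integral_Ioi h₁ (hw _) le_rfl hr,
    intervalIntegral_le_integral_Ioi h₂ (hw g) le_rfl hr]

lemma pow_mul_sq_le_of_contDiff (hg : ContDiff ℝ 1 g) {l : ℕ} (hl : l = 1 ∨ l = 2)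
    (h₁ : IntegrableOn (fun s => s * (s ^ (l - 1) * deriv g s) ^ 2) (Ioi 0))
    (h₂ : IntegrableOn (fun s => s * g s ^ 2) (Ioi 0)) {r : ℝ} (hr : 0 ≤ r) :
    r ^ l * g r ^ 2 ≤
      4 * ((∫ s in Ioi 0, s * (s ^ (l - 1) * deriv g s) ^ 2) + ∫ s in Ioi 0, s * g s ^ 2) := by
  have hA₁ : 0 ≤ ∫ s in Ioi 0, s * (s ^ (l - 1) * deriv g s) ^ 2 :=
    setIntegral_nonneg measurableSet_Ioi fun x hx => mul_nonneg (le_of_lt hx) (sq_nonneg _)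
  have hA₂ : 0 ≤ ∫ s in Ioi 0, s * g s ^ 2 :=
    setIntegral_nonneg measurableSet_Ioi fun x hx => mul_nonneg (le_of_lt hx) (sq_nonneg _)
  rcases hl with rfl | rfl
  · rcases hr.eq_or_lt with rfl | hr
    · simp only [pow_one, zero_mul]; positivity
    simp only [pow_one, Nat.sub_self, pow_zero, one_mul] at h₁ hA₁ ⊢
    linarith [mul_sq_le_of_contDiff hg h₁ h₂ hr]
  · simp only [Nat.add_one_sub_one, pow_one] at h₁ hA₁ ⊢
    linarith [sq_mul_sq_le_of_contDiff hg h₁ h₂ hr]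

end OneDimensional

noncomputable def angleVec (t : ℝ) : ℝ² := !₂[cos t, sin t]

@[simp] lemma angleVec_apply_zero (t : ℝ) : angleVec t 0 = cos t := rfl

@[simp] lemma angleVec_apply_one (t : ℝ) : angleVec t 1 = sin t := rfl

lemma norm_angleVec (t : ℝ) : ‖angleVec t‖ = 1 := by
  simp [EuclideanSpace.norm_eq, Fin.sum_univ_two, cos_sq_add_sin_sq]

lemma periodic_angleVec : Periodic angleVec (2 * π) := fun t => by
  simp only [angleVec, cos_add_two_pi, sin_add_two_pi]

lemma hasDerivAt_angleVec (t : ℝ) : HasDerivAt angleVec !₂[-sin t, cos t] t := by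
  have h : HasDerivAt (fun t => ![cos t, sin t]) ![-sin t, cos t] t := by
    refine hasDerivAt_pi.2 fun i => ?_
    fin_cases i
    · exact hasDerivAt_cos t
    · exact hasDerivAt_sin t
  exact (EuclideanSpace.equiv (Fin 2) ℝ).symm.hasFDerivAt.comp_hasDerivAt t h

lemma contDiff_angleVec {n : WithTop ℕ∞} : ContDiff ℝ n angleVec := by
  have : ContDiff ℝ n fun t : ℝ => ![cos t, sin t] := by
    refine contDiff_pi.2 fun i => ?_
    fin_cases i
    · exact contDiff_cos
    · exact contDiff_sin
  exact (EuclideanSpace.equiv (Fin 2) ℝ).symm.contDiff.comp this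

lemma exists_eq_norm_smul_angleVec (x : ℝ²) : ∃ t, x = ‖x‖ • angleVec t := by
  set z : ℂ := ⟨x 0, x 1⟩
  have hz : ‖z‖ = ‖x‖ := by
    simp [Complex.norm_def, Complex.normSq_mk, EuclideanSpace.norm_eq, Fin.sum_univ_two, z, sq]
  refine ⟨Complex.arg z, ?_⟩
  ext i
  fin_cases i
  · simp [← hz, Complex.norm_mul_cos_arg, z]
  · simp [← hz, Complex.norm_mul_sin_arg, z]

section Derivatives

variable {F : ℝ² → ℝ}

lemma fderiv_apply_eq_pderiv2 (x v : ℝ²) :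
    fderiv ℝ F x v = v 0 * pderiv2 0 F x + v 1 * pderiv2 1 F x := by
  have hv : v = v 0 • EuclideanSpace.single 0 1 + v 1 • EuclideanSpace.single 1 1 := by
    ext i; fin_cases i <;> simp
  conv_lhs => rw [hv]
  simp [pderiv2]

lemma hasDerivAt_comp_smul_const (hF : Differentiable ℝ F) (θ : ℝ²) (s : ℝ) :
    HasDerivAt (fun s => F (s • θ)) (fderiv ℝ F (s • θ) θ) s := by
  have h : HasDerivAt (fun s : ℝ => s • θ) θ s := by simpa using (hasDerivAt_id s).smul_const θ
  exact (hF _).hasFDerivAt.comp_hasDerivAt s h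

lemma rderiv2_smul {θ : ℝ²} (hθ : ‖θ‖ = 1) {s : ℝ} (hs : 0 < s) :
    rderiv2 F (s • θ) = fderiv ℝ F (s • θ) θ := by
  rw [rderiv2, norm_smul, hθ, mul_one, norm_of_nonneg hs.le, smul_smul, inv_mul_cancel₀ hs.ne',
    one_smul]

lemma hasDerivAt_comp_const_smul_angleVec (hF : Differentiable ℝ F) (r t : ℝ) :
    HasDerivAt (fun t => F (r • angleVec t)) (-rot2 F (r • angleVec t)) t := by
  refine ((hF _).hasFDerivAt.comp_hasDerivAt t
    ((hasDerivAt_angleVec t).const_smul r)).congr_deriv ?_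
  rw [fderiv_apply_eq_pderiv2, rot2]
  simp only [PiLp.smul_apply, Pi.smul_apply, smul_eq_mul, Matrix.cons_val_zero,
    Matrix.cons_val_one, Matrix.cons_val_fin_one, angleVec_apply_zero, angleVec_apply_one]
  ring

lemma contDiff_comp_const_smul_angleVec {n : WithTop ℕ∞} (hF : ContDiff ℝ n F) (r : ℝ) :
    ContDiff ℝ n fun t => F (r • angleVec t) :=
  hF.comp (contDiff_angleVec.const_smul r)

lemma contDiff_rot2 (hF : ContDiff ℝ 2 F) : ContDiff ℝ 1 (rot2 F) := by
  have hd : ContDiff ℝ 1 (fderiv ℝ F) := hF.fderiv_right (by norm_num)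
  have hp (i : Fin 2) : ContDiff ℝ 1 (pderiv2 i F) := hd.clm_apply contDiff_const
  have hc (i : Fin 2) : ContDiff ℝ 1 fun x : ℝ² => x i := by fun_prop
  exact ((hc 1).mul (hp 0)).sub ((hc 0).mul (hp 1))

end Derivatives

section Polar

noncomputable def measurableEquivRealProd2 : ℝ² ≃ᵐ ℝ × ℝ :=
  (MeasurableEquiv.toLp 2 (Fin 2 → ℝ)).symm.trans MeasurableEquiv.finTwoArrow

lemma measurePreserving_measurableEquivRealProd2 :
    MeasurePreserving measurableEquivRealProd2 :=
  (volume_preserving_finTwoArrow ℝ).comp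
    (EuclideanSpace.volume_preserving_symm_measurableEquiv_toLp (Fin 2))

lemma measurableEquivRealProd2_symm_polarCoord_symm (p : ℝ × ℝ) :
    measurableEquivRealProd2.symm (polarCoord.symm p) = p.1 • angleVec p.2 := by
  ext i
  fin_cases i <;>
    simp [measurableEquivRealProd2, MeasurableEquiv.finTwoArrow, MeasurableEquiv.piFinTwo]

variable {G : ℝ² → ℝ}

lemma integral_polar (G : ℝ² → ℝ) :
    ∫ p in polarCoord.target, p.1 * G (p.1 • angleVec p.2) = ∫ x, G x := by
  rw [← measurePreserving_measurableEquivRealProd2.symm.integral_comp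
    measurableEquivRealProd2.symm.measurableEmbedding, ← integral_comp_polarCoord_symm]
  simp only [measurableEquivRealProd2_symm_polarCoord_symm, smul_eq_mul]

lemma integrableOn_polar (hG : Integrable G) :
    IntegrableOn (fun p : ℝ × ℝ => p.1 * G (p.1 • angleVec p.2)) polarCoord.target := by
  have hG' : Integrable (G ∘ measurableEquivRealProd2.symm) :=
    (measurePreserving_measurableEquivRealProd2.symm _).integrable_comp_emb
      measurableEquivRealProd2.symm.measurableEmbedding |>.2 hG
  have h := (integrableOn_image_iff_integrableOn_abs_det_fderiv_smul volume
    polarCoord.open_target.measurableSet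
    (fun p _ => (hasFDerivAt_polarCoord_symm p).hasFDerivWithinAt) polarCoord.symm.injOn
    (G ∘ measurableEquivRealProd2.symm)).1
    (by rw [polarCoord.symm_image_target_eq_source]; exact hG'.integrableOn)
  refine h.congr_fun (fun p hp => ?_) polarCoord.open_target.measurableSet
  dsimp only
  rw [det_fderivPolarCoordSymm, abs_of_pos hp.1, smul_eq_mul, comp_apply,
    measurableEquivRealProd2_symm_polarCoord_symm]

lemma volume_restrict_polarCoord_target :
    volume.restrict polarCoord.target =
      (volume.restrict (Ioi (0 : ℝ))).prod (volume.restrict (Ioo (-π) π)) := by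
  rw [Measure.prod_restrict, ← Measure.volume_eq_prod]
  rfl

lemma integrable_prod_polar (hG : Integrable G) :
    Integrable (fun p : ℝ × ℝ => p.1 * G (p.1 • angleVec p.2))
      ((volume.restrict (Ioi (0 : ℝ))).prod (volume.restrict (Ioo (-π) π))) := by
  rw [← volume_restrict_polarCoord_target]
  exact integrableOn_polar hG

lemma integral_integral_polar (hG : Integrable G) :
    ∫ t in Ioo (-π) π, ∫ s in Ioi 0, s * G (s • angleVec t) = ∫ x, G x := by
  rw [← integral_polar, volume_restrict_polarCoord_target,
    integral_prod_symm _ (integrable_prod_polar hG)]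

end Polar

section Estimates

variable {F : ℝ² → ℝ} {l : ℕ}

lemma pow_mul_sq_le_of_ray (hF : ContDiff ℝ 1 F) (hl : l = 1 ∨ l = 2) {θ : ℝ²} (hθ : ‖θ‖ = 1)
    (h₁ : IntegrableOn (fun s => s * (‖s • θ‖ ^ (l - 1) * rderiv2 F (s • θ)) ^ 2) (Ioi 0))
    (h₂ : IntegrableOn (fun s => s * F (s • θ) ^ 2) (Ioi 0)) {r : ℝ} (hr : 0 ≤ r) :
    r ^ l * F (r • θ) ^ 2 ≤
      4 * ((∫ s in Ioi 0, s * (‖s • θ‖ ^ (l - 1) * rderiv2 F (s • θ)) ^ 2) +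
        ∫ s in Ioi 0, s * F (s • θ) ^ 2) := by
  have hray : ContDiff ℝ 1 fun s : ℝ => F (s • θ) := hF.comp (contDiff_id.smul contDiff_const)
  have hradial : EqOn (fun s => s * (‖s • θ‖ ^ (l - 1) * rderiv2 F (s • θ)) ^ 2)
      (fun s => s * (s ^ (l - 1) * deriv (fun s : ℝ => F (s • θ)) s) ^ 2) (Ioi 0) := by
    intro s hs
    simp only [norm_smul, hθ, mul_one, norm_of_nonneg (le_of_lt hs), rderiv2_smul hθ hs,
      (hasDerivAt_comp_smul_const (hF.differentiable one_ne_zero) θ s).deriv]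
  rw [setIntegral_congr_fun measurableSet_Ioi hradial]
  exact pow_mul_sq_le_of_contDiff hray hl (h₁.congr_fun hradial measurableSet_Ioi) h₂ hr

lemma pow_mul_integral_circle_le (hF : ContDiff ℝ 1 F) (hl : l = 1 ∨ l = 2)
    (h₁ : Integrable fun y => (‖y‖ ^ (l - 1) * rderiv2 F y) ^ 2)
    (h₂ : Integrable fun y => F y ^ 2) {r : ℝ} (hr : 0 ≤ r) :
    r ^ l * ∫ t in -π..π, F (r • angleVec t) ^ 2 ≤
      4 * ((∫ y, (‖y‖ ^ (l - 1) * rderiv2 F y) ^ 2) + ∫ y, F y ^ 2) := by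
  have P₁ := integrable_prod_polar h₁
  have P₂ := integrable_prod_polar h₂
  have hL : Integrable (fun t => r ^ l * F (r • angleVec t) ^ 2)
      (volume.restrict (Ioo (-π) π)) :=
    ((((contDiff_comp_const_smul_angleVec hF r).continuous.pow 2).integrableOn_Icc
      (a := -π) (b := π)).mono_set Ioo_subset_Icc_self).const_mul _
  have I₁ : Integrable (fun t => ∫ s in Ioi 0,
      s * (‖s • angleVec t‖ ^ (l - 1) * rderiv2 F (s • angleVec t)) ^ 2)
      (volume.restrict (Ioo (-π) π)) := P₁.integral_prod_right
  have I₂ : Integrable (fun t => ∫ s in Ioi 0, s * F (s • angleVec t) ^ 2)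
      (volume.restrict (Ioo (-π) π)) := P₂.integral_prod_right
  have hray : ∀ᵐ t ∂(volume.restrict (Ioo (-π) π)), r ^ l * F (r • angleVec t) ^ 2 ≤
      4 * ((∫ s in Ioi 0, s * (‖s • angleVec t‖ ^ (l - 1) * rderiv2 F (s • angleVec t)) ^ 2) +
        ∫ s in Ioi 0, s * F (s • angleVec t) ^ 2) := by
    filter_upwards [P₁.prod_left_ae, P₂.prod_left_ae] with t ht₁ ht₂
    exact pow_mul_sq_le_of_ray hF hl (norm_angleVec t) ht₁ ht₂ hr
  calc r ^ l * ∫ t in -π..π, F (r • angleVec t) ^ 2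
      = ∫ t in Ioo (-π) π, r ^ l * F (r • angleVec t) ^ 2 := by
        rw [intervalIntegral.integral_of_le (by linarith [pi_pos]), integral_Ioc_eq_integral_Ioo,
          integral_const_mul]
    _ ≤ ∫ t in Ioo (-π) π, 4 * ((∫ s in Ioi 0,
          s * (‖s • angleVec t‖ ^ (l - 1) * rderiv2 F (s • angleVec t)) ^ 2) +
          ∫ s in Ioi 0, s * F (s • angleVec t) ^ 2) :=
        integral_mono_ae hL ((I₁.add I₂).const_mul 4) hray
    _ = 4 * ((∫ y, (‖y‖ ^ (l - 1) * rderiv2 F y) ^ 2) + ∫ y, F y ^ 2) := by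
        rw [integral_const_mul, integral_add I₁ I₂, integral_integral_polar h₁,
          integral_integral_polar h₂]

lemma sq_le_integral_circle (hF : ContDiff ℝ 1 F) (r t : ℝ) :
    F (r • angleVec t) ^ 2 ≤
      2 * ∫ s in -π..π, (F (r • angleVec s) ^ 2 + rot2 F (r • angleVec s) ^ 2) := by
  have hderiv (s : ℝ) : deriv (fun t => F (r • angleVec t)) s = -rot2 F (r • angleVec s) :=
    (hasDerivAt_comp_const_smul_angleVec (hF.differentiable one_ne_zero) r s).deriv
  have h := sq_le_integral_of_periodic (contDiff_comp_const_smul_angleVec hF r) two_pi_pos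
    (fun s => by simp only [periodic_angleVec s]) (-π) t
  simp only [hderiv, neg_sq, show -π + 2 * π = π by ring] at h
  refine h.trans (mul_le_mul_of_nonneg_right ?_ (intervalIntegral.integral_nonneg
    (by linarith [pi_pos]) fun s _ => by positivity))
  have : (2 * π)⁻¹ ≤ 1 := inv_le_one_of_one_le₀ (by linarith [pi_gt_three])
  linarith

end Estimates

/-- Lemma 3.3, first inequality: for `f ∈ H²(ℝ²)`, `λ ∈ {1,2}`,
`r^λ |f(x)|² ≤ C ∑_{a=0,1} (‖r^{λ-1} ∂_r Ω^a f‖²_{L²} + ‖Ω^a f‖²_{L²})`. -/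
theorem weighted_decay_R2 :
    ∃ C : ℝ, 0 < C ∧
      ∀ (f : EuclideanSpace ℝ (Fin 2) → ℝ) (l : ℕ), (l = 1 ∨ l = 2) →
        ContDiff ℝ 2 f →
        Integrable (fun x : EuclideanSpace ℝ (Fin 2) => (‖x‖ ^ (l - 1) * rderiv2 f x) ^ 2) →
        Integrable (fun x : EuclideanSpace ℝ (Fin 2) => (‖x‖ ^ (l - 1) * rderiv2 (rot2 f) x) ^ 2) →
        Integrable (fun x : EuclideanSpace ℝ (Fin 2) => (f x) ^ 2) →
        Integrable (fun x : EuclideanSpace ℝ (Fin 2) => (rot2 f x) ^ 2) →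
        ∀ x : EuclideanSpace ℝ (Fin 2),
          ‖x‖ ^ l * (f x) ^ 2 ≤
            C * ((∫ y : EuclideanSpace ℝ (Fin 2), (‖y‖ ^ (l - 1) * rderiv2 f y) ^ 2) +
                 (∫ y : EuclideanSpace ℝ (Fin 2), (‖y‖ ^ (l - 1) * rderiv2 (rot2 f) y) ^ 2) +
                 (∫ y : EuclideanSpace ℝ (Fin 2), (f y) ^ 2) +
                 ∫ y : EuclideanSpace ℝ (Fin 2), (rot2 f y) ^ 2) := by
  refine ⟨8, by norm_num, fun f l hl hf h₁ h₂ h₃ h₄ x => ?_⟩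
  have hf₁ : ContDiff ℝ 1 f := hf.of_le (by norm_num)
  have hrot := contDiff_rot2 hf
  obtain ⟨t, hx⟩ := exists_eq_norm_smul_angleVec x
  set r := ‖x‖
  have hint (F : ℝ² → ℝ) (hF : ContDiff ℝ 1 F) :
      IntervalIntegrable (fun s => F (r • angleVec s) ^ 2) volume (-π) π :=
    ((contDiff_comp_const_smul_angleVec hF r).continuous.pow 2).intervalIntegrable _ _
  have hbound_f := pow_mul_integral_circle_le hf₁ hl h₁ h₃ (norm_nonneg x)
  have hbound_rot := pow_mul_integral_circle_le hrot hl h₂ h₄ (norm_nonneg x)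
  calc r ^ l * f x ^ 2
      ≤ r ^ l * (2 * ∫ s in -π..π, (f (r • angleVec s) ^ 2 + rot2 f (r • angleVec s) ^ 2)) := by
        rw [hx]; exact mul_le_mul_of_nonneg_left (sq_le_integral_circle hf₁ r t) (by positivity)
    _ = 2 * (r ^ l * (∫ s in -π..π, f (r • angleVec s) ^ 2) +
          r ^ l * ∫ s in -π..π, rot2 f (r • angleVec s) ^ 2) := by
        rw [intervalIntegral.integral_add (hint f hf₁) (hint _ hrot)]
        ring
    _ ≤ _ := by linarith
end

section
/- Let x(t,·) be a time-dependent family of C² diffeomorphisms of ℝⁿ with inverse X(t,·), and define F(t,x) = (∂x/∂X)|_{X=X(t,x)} and G = F - I. Then for all i,j,k: ∂_j G_{ik} - ∂_k G_{ij} = G_{mk} ∂_m G_{ij} - G_{mj} ∂_m G_{ik}, where ∂ denotes spatial derivatives and summation over m is implied. -/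
/-!
Write `D_d = ∑ₘ F_{md} ∂ₘ`. Since `ψ ∘ φ = id`, the chain rule makes `D_d (g ∘ ψ) = (∂_d g) ∘ ψ`,
so `D_d G_{ab} = (∂_d ∂_b φ_a) ∘ ψ`, which is symmetric in `b, d`. As `G = F - I`,
`∑ₘ G_{md} ∂ₘ G_{ab} = D_d G_{ab} - ∂_d G_{ab}`; antisymmetrizing in `(d, b) = (k, j)` the second
derivatives of `φ` cancel and what remains is the identity.
-/

/-- Partial derivative `∂_i f` on `ℝⁿ`. -/
noncomputable def pdn {n : ℕ} (i : Fin n) (f : (Fin n → ℝ) → ℝ) (x : Fin n → ℝ) : ℝ :=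
  fderiv ℝ f x (Pi.single i 1)

section

variable {𝕜 E F H : Type*} [NontriviallyNormedField 𝕜] [NormedAddCommGroup E] [NormedSpace 𝕜 E]
  [NormedAddCommGroup F] [NormedSpace 𝕜 F] [NormedAddCommGroup H] [NormedSpace 𝕜 H]

theorem fderiv_comp_apply_fderiv_of_leftInverse {φ : E → F} {ψ : F → E} {g : E → H} {X : E}
    (hleft : Function.LeftInverse ψ φ) (hφ : DifferentiableAt 𝕜 φ X)
    (hψ : DifferentiableAt 𝕜 ψ (φ X)) (hg : DifferentiableAt 𝕜 g X) (v : E) :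
    fderiv 𝕜 (g ∘ ψ) (φ X) (fderiv 𝕜 φ X v) = fderiv 𝕜 g X v := by
  have hgψ : DifferentiableAt 𝕜 (g ∘ ψ) (φ X) := by
    rw [← hleft X] at hg
    exact hg.comp _ hψ
  have hcancel : (g ∘ ψ) ∘ φ = g := funext fun Y => congrArg g (hleft Y)
  rw [← ContinuousLinearMap.comp_apply, ← fderiv_comp X hgψ hφ, hcancel]

end

section

variable {n : ℕ}

theorem fderiv_apply_eq_sum_pdn (f : (Fin n → ℝ) → ℝ) (x v : Fin n → ℝ) :
    fderiv ℝ f x v = ∑ m, v m * pdn m f x := by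
  conv_lhs => rw [pi_eq_sum_univ' v]
  simp only [map_sum, map_smul, smul_eq_mul, pdn]

theorem pdn_apply_eq_fderiv {ι : Type*} [Fintype ι] {f : (Fin n → ℝ) → ι → ℝ} {x : Fin n → ℝ}
    (hf : DifferentiableAt ℝ f x) (i : ι) (j : Fin n) :
    pdn j (fun y => f y i) x = fderiv ℝ f x (Pi.single j 1) i := by
  rw [pdn, fderiv_apply hf]
  rfl

theorem pdn_sub_const (i : Fin n) (f : (Fin n → ℝ) → ℝ) (c : ℝ) (x : Fin n → ℝ) :
    pdn i (fun y => f y - c) x = pdn i f x := by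
  rw [pdn, pdn, fderiv_sub_const]

theorem pdn_pdn_eq_fderiv_fderiv {f : (Fin n → ℝ) → ℝ} {x : Fin n → ℝ}
    (hf : DifferentiableAt ℝ (fderiv ℝ f) x) (j k : Fin n) :
    pdn j (pdn k f) x = fderiv ℝ (fderiv ℝ f) x (Pi.single j 1) (Pi.single k 1) := by
  unfold pdn
  rw [fderiv_clm_apply hf (differentiableAt_const _)]
  simp

theorem ContDiff.pdn {k : WithTop ℕ∞} {f : (Fin n → ℝ) → ℝ} (hf : ContDiff ℝ (k + 1) f)
    (i : Fin n) : ContDiff ℝ k (pdn i f) :=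
  (hf.fderiv_right le_rfl).clm_apply contDiff_const

theorem pdn_pdn_comm {f : (Fin n → ℝ) → ℝ} (hf : ContDiff ℝ 2 f) (j k : Fin n)
    (x : Fin n → ℝ) : pdn j (pdn k f) x = pdn k (pdn j f) x := by
  have hf' : DifferentiableAt ℝ (fderiv ℝ f) x :=
    ((hf.fderiv_right (m := 1) (by norm_num)).differentiable (by norm_num)) x
  rw [pdn_pdn_eq_fderiv_fderiv hf', pdn_pdn_eq_fderiv_fderiv hf',
    (hf.contDiffAt.isSymmSndFDerivAt (by simp)).eq]

theorem sum_pdn_mul_pdn_comp_of_leftInverse {φ ψ : (Fin n → ℝ) → Fin n → ℝ}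
    {g : (Fin n → ℝ) → ℝ} {X : Fin n → ℝ}
    (hleft : Function.LeftInverse ψ φ) (hφ : DifferentiableAt ℝ φ X)
    (hψ : DifferentiableAt ℝ ψ (φ X)) (hg : DifferentiableAt ℝ g X) (d : Fin n) :
    ∑ m, pdn d (fun Y => φ Y m) X * pdn m (g ∘ ψ) (φ X) = pdn d g X := by
  simp only [pdn_apply_eq_fderiv hφ, ← fderiv_apply_eq_sum_pdn]
  exact fderiv_comp_apply_fderiv_of_leftInverse hleft hφ hψ hg _

end

/-- Lemma 2.1, identity (2.1): if `φ` is a C² diffeomorphism (a deformation at a fixed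
time) with inverse `ψ`, `F(x) = (∂φ/∂X)|_{X=ψ(x)}` its deformation gradient in spatial
coordinates and `G = F - I`, then
`∂_j G_{ik} - ∂_k G_{ij} = G_{mk} ∂_m G_{ij} - G_{mj} ∂_m G_{ik}`. -/
theorem deformation_gradient_constraint (n : ℕ)
    (φ ψ : (Fin n → ℝ) → Fin n → ℝ)
    (hφ : ContDiff ℝ 2 φ) (hψ : ContDiff ℝ 2 ψ)
    (hleft : Function.LeftInverse ψ φ) (hright : Function.RightInverse ψ φ)
    (F G : (Fin n → ℝ) → Fin n → Fin n → ℝ)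
    (hF : ∀ x i j, F x i j = pdn j (fun X => φ X i) (ψ x))
    (hG : ∀ x i j, G x i j = F x i j - (if i = j then 1 else 0)) :
    ∀ (x : Fin n → ℝ) (i j k : Fin n),
      pdn j (fun y => G y i k) x - pdn k (fun y => G y i j) x =
        ∑ m : Fin n,
          (G x m k * pdn m (fun y => G y i j) x - G x m j * pdn m (fun y => G y i k) x) := by
  intro x i j k
  have hφ_comp (a : Fin n) : ContDiff ℝ 2 (fun X => φ X a) := (contDiff_apply ℝ ℝ a).comp hφ
  have hG_comp (a b : Fin n) : (fun y => G y a b) =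
      (fun X => pdn b (fun X => φ X a) X - if a = b then 1 else 0) ∘ ψ := by
    funext y
    simp only [hG, hF, Function.comp_apply]
  have hmaterial (a b d : Fin n) : ∑ m, G x m d * pdn m (fun y => G y a b) x =
      pdn d (pdn b (fun X => φ X a)) (ψ x) - pdn d (fun y => G y a b) x := by
    have hchain := sum_pdn_mul_pdn_comp_of_leftInverse (g := fun X =>
        pdn b (fun X => φ X a) X - if a = b then 1 else 0) (X := ψ x) hleft
      (hφ.differentiable (by norm_num) _) (hψ.differentiable (by norm_num) _)
      ((((hφ_comp a).pdn (k := 1) b).sub contDiff_const).differentiable one_ne_zero _) d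
    rw [hright x, ← hG_comp, pdn_sub_const] at hchain
    simp only [← hF] at hchain
    simp only [hG x, sub_mul, Finset.sum_sub_distrib, hchain, ite_mul, one_mul, zero_mul,
      Finset.sum_ite_eq', Finset.mem_univ, if_true]
  rw [Finset.sum_sub_distrib, hmaterial, hmaterial, pdn_pdn_comm (hφ_comp i) k j]
  ring
end
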